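/- arXiv:1608.03647 — 2 statements merged into one kernel-verified Lean document; each statement's English description precedes it below -/
import Mathlib

section
/- If a value function V on a deterministic task is both valid and optimal, then V is consistent. -/
variable {S A : Type*}

/-- The state value `V⟨s⟩ = max_{b ∈ A} V(s, b)`. -/
def sval [Fintype A] (V : S → A → ℕ) (s : S) : ℕ := Finset.univ.sup (V s)

/-- The trajectory of states visited in a deterministic task, starting at `s`
and following the action stream `as`. -/
def traj (δ : S → A → S) (s : S) (as : ℕ → A) : ℕ → S
  | 0 => s
  | i + 1 => δ (traj δ s as i) (as i)

/-- The value of the action-path of length `n` starting at `s` and following `as`: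
`pval p = max_i clamp(R(sᵢ,aᵢ) − i·K)` (1-based `i`). -/
def pathVal (δ : S → A → S) (R : S → A → ℕ) (K : ℕ) (s : S) (as : ℕ → A) (n : ℕ) : ℕ :=
  (Finset.range n).sup fun i => ((R (traj δ s as i) (as i) : ℤ) - ((i : ℕ) + 1) * K).toNat

/-- The optimal value of a state: the largest path value among action-paths starting at `s`. -/
noncomputable def optval (δ : S → A → S) (R : S → A → ℕ) (K : ℕ) (s : S) : ℕ :=
  sSup {v | ∃ (n : ℕ) (as : ℕ → A), 0 < n ∧ v = pathVal δ R K s as n}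

/-- `V` is valid: `V(s,a) ≤ clamp(max(V⟨δ(s,a)⟩, R(s,a)) − K)` for all `(s,a)`. -/
def validV [Fintype A] (δ : S → A → S) (R : S → A → ℕ) (K : ℕ) (V : S → A → ℕ) : Prop :=
  ∀ s a, V s a ≤ (max ((sval V (δ s a) : ℤ)) ((R s a : ℤ)) - (K : ℤ)).toNat

/-- `V` is consistent: for every state `s` and every preferred action `a` at `s`,
`V⟨s⟩ = clamp(max(V⟨δ(s,a)⟩, R(s,a)) − K)`. -/
def consistentV [Fintype A] (δ : S → A → S) (R : S → A → ℕ) (K : ℕ) (V : S → A → ℕ) : Prop :=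
  ∀ s a, V s a = sval V s →
    sval V s = (max ((sval V (δ s a) : ℤ)) ((R s a : ℤ)) - (K : ℤ)).toNat

/-! Validity at a preferred action `a` gives `V⟨s⟩ ≤ clamp(max(V⟨s'⟩, R(s,a)) − K)`. Conversely,
prepending `a` to an optimal path from `s' = δ(s,a)` yields a path from `s` of value exactly
`clamp(max(optval s', R(s,a)) − K)`, so optimality of `V` gives the reverse inequality. Finiteness
of the task bounds the path values, so `optval s'` is attained. -/

lemma traj_succ' (δ : S → A → S) (s : S) (as : ℕ → A) (i : ℕ) :
    traj δ s as (i + 1) = traj δ (δ s (as 0)) (fun j => as (j + 1)) i := by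
  induction i with
  | zero => rfl
  | succ i ih => exact congrArg (δ · (as (i + 1))) ih

lemma pathVal_eq_sup_tsub (δ : S → A → S) (R : S → A → ℕ) (K : ℕ) (s : S) (as : ℕ → A)
    (n : ℕ) :
    pathVal δ R K s as n =
      (Finset.range n).sup fun i => R (traj δ s as i) (as i) - (i + 1) * K := by
  simp only [pathVal]
  congr 1; ext i
  exact_mod_cast Int.toNat_sub _ _

lemma pathVal_succ (δ : S → A → S) (R : S → A → ℕ) (K : ℕ) (s : S) (as : ℕ → A) (n : ℕ) :
    pathVal δ R K s as (n + 1) =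
      max (R s (as 0)) (pathVal δ R K (δ s (as 0)) (fun j => as (j + 1)) n) - K := by
  have tsub_K_mono : Monotone (· - K : ℕ → ℕ) := fun _ _ h => Nat.sub_le_sub_right h K
  rw [tsub_K_mono.map_max, pathVal_eq_sup_tsub, pathVal_eq_sup_tsub,
    Finset.apply_sup_eq_sup_comp_of_linearOrder _ tsub_K_mono (Nat.zero_sub K),
    Finset.range_add_one', Finset.sup_insert, Finset.sup_map]
  congr 1
  · simp [traj]
  · congr 1; ext i
    change R (traj δ s as (i + 1)) (as (i + 1)) - (i + 1 + 1) * K = _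
    rw [traj_succ', Function.comp_apply, Nat.sub_sub, add_one_mul (i + 1)]

lemma pathVal_le_of_forall_le (δ : S → A → S) {R : S → A → ℕ} (K : ℕ) {M : ℕ}
    (hM : ∀ s a, R s a ≤ M) (s : S) (as : ℕ → A) (n : ℕ) : pathVal δ R K s as n ≤ M := by
  rw [pathVal_eq_sup_tsub]
  exact Finset.sup_le fun i _ => (Nat.sub_le _ _).trans (hM _ _)

lemma bddAbove_pathVal [Finite S] [Finite A] (δ : S → A → S) (R : S → A → ℕ) (K : ℕ) (s : S) :
    BddAbove {v | ∃ (n : ℕ) (as : ℕ → A), 0 < n ∧ v = pathVal δ R K s as n} := by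
  obtain ⟨M, hM⟩ := (Set.finite_range (Function.uncurry R)).bddAbove
  refine ⟨M, ?_⟩
  rintro _ ⟨n, as, -, rfl⟩
  exact pathVal_le_of_forall_le δ K (fun s a => hM ⟨(s, a), rfl⟩) s as n

lemma pathVal_le_optval [Finite S] [Finite A] (δ : S → A → S) (R : S → A → ℕ) (K : ℕ) (s : S)
    (as : ℕ → A) {n : ℕ} (hn : 0 < n) : pathVal δ R K s as n ≤ optval δ R K s :=
  le_csSup (bddAbove_pathVal δ R K s) ⟨n, as, hn, rfl⟩

lemma exists_pathVal_eq_optval [Finite S] [Finite A] [Nonempty A] (δ : S → A → S)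
    (R : S → A → ℕ) (K : ℕ) (s : S) :
    ∃ (n : ℕ) (as : ℕ → A), 0 < n ∧ optval δ R K s = pathVal δ R K s as n := by
  refine Nat.sSup_mem ?_ (bddAbove_pathVal δ R K s)
  exact ⟨_, 1, fun _ => Classical.arbitrary A, one_pos, rfl⟩

lemma max_tsub_le_optval [Finite S] [Finite A] (δ : S → A → S) (R : S → A → ℕ) (K : ℕ)
    (s : S) (a : A) : max (R s a) (optval δ R K (δ s a)) - K ≤ optval δ R K s := by
  have : Nonempty A := ⟨a⟩
  obtain ⟨n, as, -, h_opt⟩ := exists_pathVal_eq_optval δ R K (δ s a)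
  have h_cons := pathVal_succ δ R K s (Stream'.cons a as) n
  rw [h_opt]
  exact h_cons ▸ pathVal_le_optval δ R K s (Stream'.cons a as) n.succ_pos

theorem valid_optimal_imp_consistent_general [Fintype S] [Fintype A]
    (δ : S → A → S) (R : S → A → ℕ) (K : ℕ) (V : S → A → ℕ)
    (hvalid : validV δ R K V)
    (hopt : ∀ s, sval V s = optval δ R K s) :
    consistentV δ R K V := by
  intro s a h_pref
  rw [← Nat.cast_max, Int.toNat_sub]
  refine le_antisymm ?_ ?_
  · simpa only [h_pref, ← Nat.cast_max, Int.toNat_sub] using hvalid s a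
  · rw [hopt, hopt, max_comm]
    exact max_tsub_le_optval δ R K s a

/-- If a value function on a deterministic task is both valid and optimal,
then it is consistent. -/
theorem valid_optimal_imp_consistent [Fintype S] [Fintype A]
    (δ : S → A → S) (R : S → A → ℕ) (K : ℕ) (hK : 1 ≤ K) (V : S → A → ℕ)
    (hvalid : validV δ R K V)
    (hopt : ∀ s, sval V s = optval δ R K s) :
    consistentV δ R K V :=
  valid_optimal_imp_consistent_general δ R K V hvalid hopt
end

section
/- Every infinite run of Value-Ramp on a task decomposes into an infinite sequence of value-sprints; equivalently, it is impossible that from some index i onward every transition satisfies Vⱼ⟨sⱼ⟩ ≤ Vⱼ⟨sⱼ₊₁⟩ − K. -/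
/-!
Along a run every value stays below `B`, the largest of the initial values and the rewards:
the updated entry becomes at most `max (V⟨s'⟩, R(s,a)) ≤ B` because `V(s,a) ≤ V⟨s⟩`. On a
step with `V⟨s⟩ + K ≤ V⟨s'⟩` the update does not decrease the executed entry, so `V⟨s'⟩` is
still at least `V⟨s⟩ + K` afterwards. Hence if no sprint ended from index `i` on, the value of
the current state would grow by `K ≥ 1` at every step, exceeding `B` after `B + 1` steps.
-/

variable {S A : Type*}

section sval

variable [Fintype A] {V W : S → A → ℕ} {s : S}

theorem le_sval (V : S → A → ℕ) (s : S) (a : A) : V s a ≤ sval V s :=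
  Finset.le_sup (Finset.mem_univ a)

theorem sval_le {B : ℕ} (h : ∀ a, V s a ≤ B) : sval V s ≤ B :=
  Finset.sup_le fun a _ => h a

theorem sval_mono (h : ∀ a, V s a ≤ W s a) : sval V s ≤ sval W s :=
  sval_le fun a => (h a).trans (le_sval W s a)

end sval

/-- `Int.toNat` is the clamp of the Value-Ramp update. -/
structure IsValueRampRun [Fintype A] (R : S → A → ℕ) (K : ℕ) (st : ℕ → S)
    (V : ℕ → S → A → ℕ) (act : ℕ → A) : Prop where
  update_self : ∀ i, V (i + 1) (st i) (act i) =
    ((V i (st i) (act i) : ℤ) + max ((sval (V i) (st (i + 1)) : ℤ)) ((R (st i) (act i) : ℤ))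
      - (K : ℤ) - (sval (V i) (st i) : ℤ)).toNat
  update_of_ne : ∀ i t b, (t, b) ≠ (st i, act i) → V (i + 1) t b = V i t b

namespace IsValueRampRun

variable [Fintype A] {R : S → A → ℕ} {K : ℕ} {st : ℕ → S} {V : ℕ → S → A → ℕ} {act : ℕ → A}

theorem le_bound (run : IsValueRampRun R K st V act) {B : ℕ}
    (hV₀ : ∀ s a, V 0 s a ≤ B) (hR : ∀ s a, R s a ≤ B) : ∀ j s a, V j s a ≤ B := by
  intro j
  induction j with
  | zero => exact hV₀
  | succ j ih =>
    intro s a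
    by_cases hsa : (s, a) = (st j, act j)
    · obtain ⟨rfl, rfl⟩ := Prod.mk.inj hsa
      have hself := le_sval (V j) (st j) (act j)
      have hnext := sval_le (ih (st (j + 1)))
      have hr := hR (st j) (act j)
      rw [run.update_self j]
      omega
    · rw [run.update_of_ne j s a hsa]
      exact ih s a

theorem le_succ_of_climb (run : IsValueRampRun R K st V act) {j : ℕ}
    (hclimb : sval (V j) (st j) + K ≤ sval (V j) (st (j + 1))) (t : S) (b : A) :
    V j t b ≤ V (j + 1) t b := by
  by_cases htb : (t, b) = (st j, act j)
  · obtain ⟨rfl, rfl⟩ := Prod.mk.inj htb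
    rw [run.update_self j]
    omega
  · rw [run.update_of_ne j t b htb]

theorem sval_add_mul_le (run : IsValueRampRun R K st V act) {i : ℕ}
    (hclimb : ∀ j, i ≤ j → sval (V j) (st j) + K ≤ sval (V j) (st (j + 1))) (n : ℕ) :
    sval (V i) (st i) + n * K ≤ sval (V (i + n)) (st (i + n)) := by
  induction n with
  | zero => simp
  | succ n ih =>
    have hstep := hclimb (i + n) (Nat.le_add_right i n)
    have hmono := sval_mono (s := st (i + n + 1)) (run.le_succ_of_climb hstep _)
    rw [← add_assoc]
    linarith [add_one_mul n K]

end IsValueRampRun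

theorem run_is_sequence_of_sprints_general [Fintype S] [Fintype A]
    (R : S → A → ℕ) (K : ℕ) (hK : 1 ≤ K)
    (st : ℕ → S) (V : ℕ → S → A → ℕ) (act : ℕ → A)
    (hupd : ∀ i, V (i + 1) (st i) (act i) =
      ((V i (st i) (act i) : ℤ) + max ((sval (V i) (st (i + 1)) : ℤ)) ((R (st i) (act i) : ℤ))
        - (K : ℤ) - (sval (V i) (st i) : ℤ)).toNat)
    (hoth : ∀ i t b, (t, b) ≠ (st i, act i) → V (i + 1) t b = V i t b) :
    ∀ i : ℕ, ∃ j, i ≤ j ∧ (sval (V j) (st (j + 1)) : ℤ) - K < (sval (V j) (st j) : ℤ) := by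
  intro i
  by_contra! hno_end
  have run : IsValueRampRun R K st V act := ⟨hupd, hoth⟩
  obtain ⟨B, hB⟩ := Finite.exists_le fun p : S × A => max (V 0 p.1 p.2) (R p.1 p.2)
  have hbound := run.le_bound (fun s a => (le_max_left _ _).trans (hB (s, a)))
    (fun s a => (le_max_right _ _).trans (hB (s, a)))
  have hclimb : ∀ j, i ≤ j → sval (V j) (st j) + K ≤ sval (V j) (st (j + 1)) := fun j hj => by
    have := hno_end j hj
    omega
  have hgrow := run.sval_add_mul_le hclimb (B + 1)
  have hcap := sval_le (hbound (i + (B + 1)) (st (i + (B + 1))))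
  nlinarith

/-- Every run is an infinite sequence of value-sprints: it is impossible that from some
index `i` onward every transition satisfies `Vⱼ⟨sⱼ⟩ ≤ Vⱼ⟨sⱼ₊₁⟩ − K`; equivalently,
sprint endpoints `Vⱼ⟨sⱼ⟩ > Vⱼ⟨sⱼ₊₁⟩ − K` occur beyond every index. -/
theorem run_is_sequence_of_sprints [Fintype S] [Fintype A] [Nonempty S] [Nonempty A]
    (tr : S → A → Finset S) (htr : ∀ s a, (tr s a).Nonempty)
    (R : S → A → ℕ) (K : ℕ) (hK : 1 ≤ K)
    (st : ℕ → S) (V : ℕ → S → A → ℕ) (act : ℕ → A)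
    (hstep : ∀ i, st (i + 1) ∈ tr (st i) (act i))
    (hupd : ∀ i, V (i + 1) (st i) (act i) =
      ((V i (st i) (act i) : ℤ) + max ((sval (V i) (st (i + 1)) : ℤ)) ((R (st i) (act i) : ℤ))
        - (K : ℤ) - (sval (V i) (st i) : ℤ)).toNat)
    (hoth : ∀ i t b, (t, b) ≠ (st i, act i) → V (i + 1) t b = V i t b) :
    ∀ i : ℕ, ∃ j, i ≤ j ∧ (sval (V j) (st (j + 1)) : ℤ) - K < (sval (V j) (st j) : ℤ) :=
  run_is_sequence_of_sprints_general R K hK st V act hupd hoth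
end
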